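/- Let S_P ⊆ (Fin m → Γ_P), S_Q ⊆ (Fin n → Γ_Q), with bijection R : S_Q ≃ S_P and structure g, f (injective per index), v as in the meta-theorem, and assume every i : Fin m is in the range of g. Then the minimum clue size needed to uniquify some element of S_P equals the minimum clue size needed to uniquify some element of S_Q. -/

import Mathlib

open scoped Classical

def Satisfies {m : ℕ} {Γ : Type*} (c : Fin m → Option Γ) (s : Fin m → Γ) : Prop :=
  ∀ i a, c i = some a → s i = a

noncomputable def clueSize {m : ℕ} {Γ : Type*} (c : Fin m → Option Γ) : ℕ :=
  Set.ncard {i | c i ≠ none}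

def UniqDetAt {m : ℕ} {Γ : Type*} (S : Set (Fin m → Γ)) (c : Fin m → Option Γ)
    (s : Fin m → Γ) : Prop :=
  s ∈ S ∧ Satisfies c s ∧ ∀ t ∈ S, Satisfies c t → t = s

def UniqDet {m : ℕ} {Γ : Type*} (S : Set (Fin m → Γ)) (c : Fin m → Option Γ) : Prop :=
  ∃ s, UniqDetAt S c s

/-!
A clue only matters through the set of cells it fixes in the solution it singles out, so the
minimum clue size is the minimum size of a set of cells on which `s ∈ S` is the only element
of `S` agreeing with `s`. Through `R`, two `Q`-solutions agree at a cell `j` iff the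
corresponding `P`-solutions agree at the cell `g j` (`f j` is injective and cells with
`g j = none` are constant). Hence a determining set `I` of `P`-cells lifts, along a section
of `g`, to a determining set of `Q`-cells of the same size, and a determining set `J` of
`Q`-cells projects to the determining set `g '' J` of `P`-cells, which is no larger.
-/

lemma Nat.sInf_eq_sInf_of_forall_exists_le {A B : Set ℕ}
    (hAB : ∀ a ∈ A, ∃ b ∈ B, b ≤ a) (hBA : ∀ b ∈ B, ∃ a ∈ A, a ≤ b) : sInf A = sInf B := by
  rcases B.eq_empty_or_nonempty with rfl | hB
  · have hA : A = ∅ := Set.eq_empty_of_forall_notMem fun a ha => by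
      obtain ⟨b, hb, -⟩ := hAB a ha
      exact hb
    rw [hA]
  obtain ⟨a, ha, hab⟩ := hBA _ (Nat.sInf_mem hB)
  obtain ⟨b, hb, hba⟩ := hAB _ (Nat.sInf_mem ⟨a, ha⟩)
  exact le_antisymm ((Nat.sInf_le ha).trans hab) ((Nat.sInf_le hb).trans hba)

def IsDetermining {ι Γ : Type*} (S : Set (ι → Γ)) (I : Set ι) (s : ι → Γ) : Prop :=
  s ∈ S ∧ ∀ t ∈ S, Set.EqOn t s I → t = s

section Clues

variable {m : ℕ} {Γ : Type*}

lemma Satisfies.satisfies_iff_eqOn {c : Fin m → Option Γ} {s : Fin m → Γ}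
    (hs : Satisfies c s) (t : Fin m → Γ) :
    Satisfies c t ↔ Set.EqOn t s {i | c i ≠ none} := by
  constructor
  · intro ht i hi
    obtain ⟨a, ha⟩ := Option.ne_none_iff_exists'.mp hi
    rw [ht i a ha, hs i a ha]
  · intro ht i a ha
    rw [ht (by simp [ha]), hs i a ha]

lemma uniqDetAt_iff (S : Set (Fin m → Γ)) (c : Fin m → Option Γ) (s : Fin m → Γ) :
    UniqDetAt S c s ↔ Satisfies c s ∧ IsDetermining S {i | c i ≠ none} s := by
  constructor
  · rintro ⟨hsS, hs, huniq⟩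
    exact ⟨hs, hsS, fun t htS ht => huniq t htS ((hs.satisfies_iff_eqOn t).mpr ht)⟩
  · rintro ⟨hs, hsS, hdet⟩
    exact ⟨hsS, hs, fun t htS ht => hdet t htS ((hs.satisfies_iff_eqOn t).mp ht)⟩

noncomputable def revealOn (s : Fin m → Γ) (I : Set (Fin m)) : Fin m → Option Γ :=
  fun i => if i ∈ I then some (s i) else none

lemma satisfies_revealOn (s : Fin m → Γ) (I : Set (Fin m)) : Satisfies (revealOn s I) s := by
  intro i a h
  unfold revealOn at h
  split_ifs at h
  exact Option.some_injective _ h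

lemma setOf_revealOn_ne_none (s : Fin m → Γ) (I : Set (Fin m)) :
    {i | revealOn s I i ≠ none} = I := by
  ext i
  by_cases hi : i ∈ I <;> simp [revealOn, hi]

lemma setOf_uniqDet_clueSize (S : Set (Fin m → Γ)) :
    {k | ∃ c : Fin m → Option Γ, UniqDet S c ∧ clueSize c = k} =
      {k | ∃ s I, IsDetermining S I s ∧ I.ncard = k} := by
  ext k
  constructor
  · rintro ⟨c, ⟨s, hs⟩, rfl⟩
    exact ⟨s, _, ((uniqDetAt_iff S c s).mp hs).2, rfl⟩
  · rintro ⟨s, I, hdet, rfl⟩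
    refine ⟨revealOn s I, ⟨s, ?_⟩, by rw [clueSize, setOf_revealOn_ne_none]⟩
    rw [uniqDetAt_iff, setOf_revealOn_ne_none]
    exact ⟨satisfies_revealOn s I, hdet⟩

end Clues

lemma Set.ncard_preimage_le_of_injective {α β : Type*} {f : α → β} (hf : f.Injective)
    {s : Set β} (hs : s.Finite) : (f ⁻¹' s).ncard ≤ s.ncard := by
  rw [← Set.ncard_image_of_injective _ hf]
  exact Set.ncard_le_ncard (Set.image_preimage_subset f s) hs

structure IsCellEncoding {ι κ ΓP ΓQ : Type*} {SP : Set (ι → ΓP)} {SQ : Set (κ → ΓQ)}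
    (R : ↥SQ ≃ ↥SP) (g : κ → Option ι) (f : κ → ΓP → ΓQ) (v : κ → ΓQ) : Prop where
  injective : ∀ j, Function.Injective (f j)
  apply_of_some : ∀ (s : ↥SQ) (j : κ) (i : ι),
    g j = some i → (s : κ → ΓQ) j = f j ((R s : ι → ΓP) i)
  apply_of_none : ∀ (s : ↥SQ) (j : κ), g j = none → (s : κ → ΓQ) j = v j

namespace IsCellEncoding

variable {ι κ ΓP ΓQ : Type*} {SP : Set (ι → ΓP)} {SQ : Set (κ → ΓQ)} {R : ↥SQ ≃ ↥SP}
  {g : κ → Option ι} {f : κ → ΓP → ΓQ} {v : κ → ΓQ}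

lemma val_apply_eq_iff (hE : IsCellEncoding R g f v) (s t : ↥SQ) (j : κ) :
    (s : κ → ΓQ) j = (t : κ → ΓQ) j ↔
      ∀ i, g j = some i → (R s : ι → ΓP) i = (R t : ι → ΓP) i := by
  rcases hgj : g j with _ | i
  · simp [hE.apply_of_none s j hgj, hE.apply_of_none t j hgj]
  · simp [hE.apply_of_some s j i hgj, hE.apply_of_some t j i hgj, (hE.injective j).eq_iff]

lemma isDetermining_image_of_section (hE : IsCellEncoding R g f v) (σ : ι → κ)
    (hσ : ∀ i, g (σ i) = some i) {I : Set ι} {t₀ : ↥SQ} (h : IsDetermining SP I (R t₀)) :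
    IsDetermining SQ (σ '' I) t₀ := by
  refine ⟨t₀.2, fun t ht heq => ?_⟩
  have hR : Set.EqOn (R ⟨t, ht⟩ : ι → ΓP) (R t₀) I := fun i hi =>
    (hE.val_apply_eq_iff ⟨t, ht⟩ t₀ (σ i)).mp (heq (Set.mem_image_of_mem σ hi)) i (hσ i)
  exact congrArg Subtype.val (R.injective (Subtype.ext (h.2 _ (R ⟨t, ht⟩).2 hR)))

lemma isDetermining_preimage_some_image (hE : IsCellEncoding R g f v) {J : Set κ}
    {t₀ : ↥SQ} (h : IsDetermining SQ J t₀) : IsDetermining SP (some ⁻¹' (g '' J)) (R t₀) := by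
  refine ⟨(R t₀).2, fun s hs heq => ?_⟩
  have hQ : Set.EqOn (R.symm ⟨s, hs⟩ : κ → ΓQ) t₀ J := fun j hj =>
    (hE.val_apply_eq_iff _ t₀ j).mpr fun i hgi => by
      rw [R.apply_symm_apply]
      exact heq (show some i ∈ g '' J from ⟨j, hj, hgi⟩)
  rw [← Subtype.ext (h.2 _ (R.symm ⟨s, hs⟩).2 hQ), R.apply_symm_apply]

end IsCellEncoding

theorem stmt15_general {m n : ℕ} {ΓP ΓQ : Type*}
    (SP : Set (Fin m → ΓP)) (SQ : Set (Fin n → ΓQ))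
    (R : ↥SQ ≃ ↥SP)
    (g : Fin n → Option (Fin m)) (f : Fin n → ΓP → ΓQ) (v : Fin n → ΓQ)
    (hinj : ∀ j, Function.Injective (f j))
    (hdep : ∀ (s : ↥SQ) (j : Fin n) (i : Fin m),
      g j = some i → (s : Fin n → ΓQ) j = f j ((R s : Fin m → ΓP) i))
    (hconst : ∀ (s : ↥SQ) (j : Fin n), g j = none → (s : Fin n → ΓQ) j = v j)
    (hsurj : ∀ i : Fin m, ∃ j : Fin n, g j = some i) :
    sInf {k : ℕ | ∃ c : Fin m → Option ΓP, UniqDet SP c ∧ clueSize c = k} =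
    sInf {k : ℕ | ∃ c : Fin n → Option ΓQ, UniqDet SQ c ∧ clueSize c = k} := by
  have hE : IsCellEncoding R g f v := ⟨hinj, hdep, hconst⟩
  choose σ hσ using hsurj
  have hσ_inj : σ.Injective := fun i i' h =>
    Option.some_injective _ ((hσ i).symm.trans (h ▸ hσ i'))
  rw [setOf_uniqDet_clueSize, setOf_uniqDet_clueSize]
  apply Nat.sInf_eq_sInf_of_forall_exists_le
  · rintro _ ⟨s, I, hI, rfl⟩
    have hI' : IsDetermining SP I (R (R.symm ⟨s, hI.1⟩)) := by rwa [R.apply_symm_apply]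
    exact ⟨_, ⟨_, _, hE.isDetermining_image_of_section σ hσ hI', rfl⟩,
      (Set.ncard_image_of_injective I hσ_inj).le⟩
  · rintro _ ⟨t, J, hJ, rfl⟩
    refine ⟨_, ⟨_, _, hE.isDetermining_preimage_some_image (t₀ := ⟨t, hJ.1⟩) hJ, rfl⟩, ?_⟩
    exact (Set.ncard_preimage_le_of_injective (Option.some_injective _) (Set.toFinite _)).trans
      Set.ncard_image_le

theorem stmt15 {m n : ℕ} {ΓP ΓQ : Type*}
    (SP : Set (Fin m → ΓP)) (SQ : Set (Fin n → ΓQ))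
    (hfinP : SP.Finite) (hneP : SP.Nonempty)
    (hfinQ : SQ.Finite) (hneQ : SQ.Nonempty)
    (R : ↥SQ ≃ ↥SP)
    (g : Fin n → Option (Fin m)) (f : Fin n → ΓP → ΓQ) (v : Fin n → ΓQ)
    (hinj : ∀ j, Function.Injective (f j))
    (hdep : ∀ (s : ↥SQ) (j : Fin n) (i : Fin m),
      g j = some i → (s : Fin n → ΓQ) j = f j ((R s : Fin m → ΓP) i))
    (hconst : ∀ (s : ↥SQ) (j : Fin n), g j = none → (s : Fin n → ΓQ) j = v j)
    (hsurj : ∀ i : Fin m, ∃ j : Fin n, g j = some i) :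
    sInf {k : ℕ | ∃ c : Fin m → Option ΓP, UniqDet SP c ∧ clueSize c = k} =
    sInf {k : ℕ | ∃ c : Fin n → Option ΓQ, UniqDet SQ c ∧ clueSize c = k} :=
  stmt15_general SP SQ R g f v hinj hdep hconst hsurj
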